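/- arXiv:2007.10483 — 2 statements merged into one kernel-verified Lean document; each statement's English description precedes it below -/
import Mathlib

section
/- Let {E_x}_{x=1}^{4} be a semi-SIC POVM with parameter b on ℂ², let a₋ = (1 − √(1 − 12b))/2, and let k denote the number of indices x with Tr[E_x] = a₋. Then either k = 2 or b = 1/12; in the latter case a₊ = a₋ = 1/2, i.e., Tr[E_x] = 1/2 for all x (the POVM is a SIC POVM). -/
/-! Cayley–Hamilton for a rank-one `2 × 2` matrix gives `Tr[E_x²] = (Tr E_x)²`, so tracing
`E_x = Σ_y E_x E_y` yields `t - t² = 3b` for every `t = Tr E_x`: each trace is `a₋` or `a₊`.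
If `k` of the four traces equal `a₋`, then `2 = Σ_x Tr E_x = k a₋ + (4 - k) a₊ = 2 + (2 - k) √(1 - 12b)`,
so `k = 2` unless `a₋ = a₊ = 1/2`. -/

open Matrix
open scoped ComplexOrder

noncomputable section

/-- A semi-SIC POVM with parameter `b` on `ℂ^d`: a family of `d²` positive semidefinite
rank-one matrices summing to the identity, spanning the real vector space of Hermitian
matrices, and with constant pairwise Hilbert-Schmidt inner product `b`. -/
def IsSemiSIC (d : ℕ) (b : ℝ) (E : Fin (d ^ 2) → Matrix (Fin d) (Fin d) ℂ) : Prop :=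
  (∀ x, (E x).PosSemidef) ∧
  (∀ x, (E x).rank = 1) ∧
  (∑ x, E x = 1) ∧
  (∀ A : Matrix (Fin d) (Fin d) ℂ, A.IsHermitian → A ∈ Submodule.span ℝ (Set.range E)) ∧
  (∀ x y, x ≠ y → (E x * E y).trace = (b : ℂ))

open Finset

namespace Matrix

theorem det_eq_zero_of_rank_lt {n K : Type*} [Fintype n] [DecidableEq n] [Field K]
    {A : Matrix n n K} (h : A.rank < Fintype.card n) : A.det = 0 := by
  by_contra hdet
  exact h.ne (A.rank_of_isUnit ((A.isUnit_iff_isUnit_det).mpr (Ne.isUnit hdet)))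

theorem trace_mul_self_fin_two {R : Type*} [CommRing R] (A : Matrix (Fin 2) (Fin 2) R) :
    (A * A).trace = A.trace ^ 2 - 2 * A.det := by
  simp only [trace_fin_two, det_fin_two, mul_apply, Fin.sum_univ_two]
  ring

theorem trace_mul_self_of_rank_le_one {K : Type*} [Field K] {A : Matrix (Fin 2) (Fin 2) K}
    (h : A.rank ≤ 1) : (A * A).trace = A.trace ^ 2 := by
  rw [trace_mul_self_fin_two, det_eq_zero_of_rank_lt (by simpa using h.trans_lt one_lt_two)]
  ring

theorem IsHermitian.ofReal_re_trace {n : Type*} [Fintype n] {A : Matrix n n ℂ}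
    (hA : A.IsHermitian) : (A.trace.re : ℂ) = A.trace :=
  Complex.conj_eq_iff_re.mp (by rw [← Complex.star_def, ← trace_conjTranspose, hA.eq])

theorem trace_eq_trace_mul_self_add_of_sum_eq_one {ι n R : Type*} [Fintype ι] [Fintype n] [DecidableEq n] [Semiring R] {E : ι → Matrix n n R} (hsum : ∑ x, E x = 1)
    {b : R} (hb : ∀ x y, x ≠ y → (E x * E y).trace = b) (x : ι) :
    (E x).trace = (E x * E x).trace + (Fintype.card ι - 1) • b := by
  classical
  have hoff : ∑ y ∈ univ.erase x, (E x * E y).trace = (Fintype.card ι - 1) • b := by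
    rw [sum_congr rfl fun y hy => hb x y (ne_of_mem_erase hy).symm, sum_const,
      card_erase_of_mem (mem_univ x), card_univ]
  conv_lhs => rw [← mul_one (E x), ← hsum, mul_sum, trace_sum]
  rw [← add_sum_erase _ _ (mem_univ x), hoff]

end Matrix

theorem eq_or_eq_of_sub_sq_eq {b t : ℝ} (h : t - t ^ 2 = 3 * b) :
    t = (1 - √(1 - 12 * b)) / 2 ∨ t = (1 + √(1 - 12 * b)) / 2 := by
  have hsqrt : √(1 - 12 * b) = |2 * t - 1| := by
    rw [← Real.sqrt_sq_eq_abs]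
    congr 1
    linear_combination 4 * h
  rcases abs_choice (2 * t - 1) with habs | habs <;> rw [hsqrt, habs]
  · right; ring
  · left; ring

theorem two_mul_card_filter_eq_card {ι : Type*} [Fintype ι] {t : ι → ℝ} {s : ℝ} (hs : s ≠ 0)
    (ht : ∀ x, t x = (1 - s) / 2 ∨ t x = (1 + s) / 2)
    (hsum : ∑ x, t x = Fintype.card ι / 2) :
    2 * #{x | t x = (1 - s) / 2} = Fintype.card ι := by
  set k := #{x | t x = (1 - s) / 2}
  set m := #{x | ¬t x = (1 - s) / 2}
  have hcard : k + m = Fintype.card ι := card_filter_add_card_filter_not _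
  have hother : ∀ x ∈ univ.filter (¬t · = (1 - s) / 2), t x = (1 + s) / 2 :=
    fun x hx => (ht x).resolve_left (mem_filter.mp hx).2
  rw [← sum_filter_add_sum_filter_not _ (t · = (1 - s) / 2),
    sum_congr rfl fun x hx => (mem_filter.mp hx).2, sum_congr rfl hother, sum_const, sum_const,
    nsmul_eq_mul, nsmul_eq_mul, ← hcard, Nat.cast_add] at hsum
  have hmk : s * (m - k) = 0 := by linear_combination 2 * hsum
  have : (m : ℝ) = k := by linarith [(mul_eq_zero.mp hmk).resolve_left hs]
  have : m = k := by exact_mod_cast this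
  omega

theorem IsSemiSIC.sum_trace {d : ℕ} {b : ℝ} {E : Fin (d ^ 2) → Matrix (Fin d) (Fin d) ℂ}
    (hE : IsSemiSIC d b E) : ∑ x, (E x).trace = d := by
  rw [← trace_sum, hE.2.2.1, trace_one, Fintype.card_fin]

theorem IsSemiSIC.trace_sub_sq {b : ℝ} {E : Fin (2 ^ 2) → Matrix (Fin 2) (Fin 2) ℂ}
    (hE : IsSemiSIC 2 b E) (x : Fin (2 ^ 2)) : (E x).trace - (E x).trace ^ 2 = 3 * b := by
  have h := trace_eq_trace_mul_self_add_of_sum_eq_one hE.2.2.1 hE.2.2.2.2 x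
  rw [trace_mul_self_of_rank_le_one (hE.2.1 x).le] at h
  simp only [Fintype.card_fin, nsmul_eq_mul] at h
  linear_combination h

theorem dim_two_k_eq_two_or_SIC (b : ℝ)
    (E : Fin (2 ^ 2) → Matrix (Fin 2) (Fin 2) ℂ) (hE : IsSemiSIC 2 b E)
    (aM : ℝ) (haM : aM = (1 - Real.sqrt (1 - 12 * b)) / 2)
    (k : ℕ)
    (hk : k = (Finset.univ.filter fun x => (E x).trace = (aM : ℂ)).card) :
    k = 2 ∨ (b = 1 / 12 ∧
      (1 + Real.sqrt (1 - 12 * b)) / 2 = (1 / 2 : ℝ) ∧ aM = (1 / 2 : ℝ) ∧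
      ∀ x, (E x).trace = (1 / 2 : ℂ)) := by
  set τ : Fin (2 ^ 2) → ℝ := fun x => (E x).trace.re
  have hτ (x) : (τ x : ℂ) = (E x).trace := (hE.1 x).isHermitian.ofReal_re_trace
  have hquad (x) : τ x - τ x ^ 2 = 3 * b := by
    have h := hE.trace_sub_sq x
    rw [← hτ] at h
    exact_mod_cast h
  have hsum : ∑ x, τ x = 2 := by
    have h := hE.sum_trace
    simp_rw [← hτ] at h
    exact_mod_cast h
  simp_rw [← hτ, Complex.ofReal_inj] at hk
  by_cases hs : √(1 - 12 * b) = 0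
  · right
    have hhalf (x) : τ x = 1 / 2 := by simpa [hs] using eq_or_eq_of_sub_sq_eq (hquad x)
    refine ⟨?_, by simp [hs], by simp [haM, hs], fun x => by simp [← hτ, hhalf]⟩
    have h := hquad 0
    rw [hhalf] at h
    linarith
  · left
    have h := two_mul_card_filter_eq_card hs (fun x => eq_or_eq_of_sub_sq_eq (hquad x))
      (by rw [hsum]; norm_num)
    simp only [Fintype.card_fin, ← haM, ← hk] at h
    omega
end
end

section
/- Let d ≥ 3, let {E_x}_{x=1}^{d²} be a semi-SIC POVM with parameter b on ℂ^d, let a₋ = (1 − √(1 − 4b(d²−1)))/2, and let k denote the number of indices x with Tr[E_x] = a₋. Then d² − d < k ≤ d². -/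
/-!
A rank-one matrix `E` satisfies `E² = (Tr E) E`. Pairing `E_x` with `∑_y E_y = 1` therefore
gives `Tr E_x = (Tr E_x)² + (d² - 1) b`, so every trace is one of the two roots
`a∓ = (1 ∓ s) / 2`, `s = √(1 - 4b(d² - 1))`. Taking the trace of `∑_x E_x = 1` gives
`k a₋ + (d² - k) a₊ = d`, i.e. `s (2k - d²) = d² - 2d > 0`. Hence `2k > d²`, so `a₋` is the
trace of some nonzero positive `E_x`; thus `a₋ > 0`, i.e. `s < 1`, and `2k - d² > d² - 2d`.
-/

open Matrix
open scoped ComplexOrder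

noncomputable section

namespace Matrix

variable {m n K : Type*} [Fintype n] [Field K]

theorem exists_eq_vecMulVec_of_rank_le_one {A : Matrix m n K} (hA : A.rank ≤ 1) :
    ∃ (u : m → K) (v : n → K), A = vecMulVec u v := by
  classical
  obtain ⟨u, hu⟩ := finrank_le_one_iff.mp hA
  choose c hc using fun j => hu ⟨A *ᵥ Pi.single j 1, LinearMap.mem_range_self _ _⟩
  refine ⟨u, c, ext fun i j => ?_⟩
  have := congrArg (fun w : LinearMap.range A.mulVecLin => (w : m → K) i) (hc j)
  simp only [SetLike.val_smul, Pi.smul_apply, smul_eq_mul, mulVec_single_one, col_apply] at this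
  rw [← this, vecMulVec_apply, mul_comm]

theorem mul_self_eq_trace_smul_of_rank_le_one {A : Matrix n n K} (hA : A.rank ≤ 1) :
    A * A = A.trace • A := by
  obtain ⟨u, v, rfl⟩ := exists_eq_vecMulVec_of_rank_le_one hA
  rw [vecMulVec_mul, vecMul_vecMulVec, vecMulVec_smul, trace_vecMulVec, dotProduct_comm]

theorem PosSemidef.trace_pos_of_rank_eq_one {𝕜 : Type*} [RCLike 𝕜] {A : Matrix n n 𝕜}
    (hA : A.PosSemidef) (hrank : A.rank = 1) : 0 < A.trace := by
  refine hA.trace_nonneg.lt_of_ne' fun h => ?_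
  rw [hA.trace_eq_zero_iff] at h
  simp [h] at hrank

end Matrix

theorem eq_or_eq_of_sq_sub_self_add_eq_zero {x c : ℝ} (h : x ^ 2 - x + c = 0) :
    x = (1 - √(1 - 4 * c)) / 2 ∨ x = (1 + √(1 - 4 * c)) / 2 := by
  have hdisc : 1 - 4 * c = (2 * x - 1) ^ 2 := by linear_combination (-4) * h
  rw [hdisc, Real.sqrt_sq_eq_abs]
  rcases abs_choice (2 * x - 1) with h | h <;> rw [h]
  · right; ring
  · left; ring

theorem Finset.sum_eq_card_filter_smul_add_of_forall_eq_or_eq {ι M : Type*} [AddCommMonoid M]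
    [DecidableEq M] (s : Finset ι) {f : ι → M} {α β : M} (h : ∀ i ∈ s, f i = α ∨ f i = β) :
    ∑ i ∈ s, f i = (s.filter (f · = α)).card • α + (s.filter (f · ≠ α)).card • β := by
  rw [← Finset.sum_filter_add_sum_filter_not s (f · = α),
    Finset.sum_congr rfl fun i hi => (Finset.mem_filter.mp hi).2,
    Finset.sum_congr rfl fun i hi =>
      (h i (Finset.mem_filter.mp hi).1).resolve_left (Finset.mem_filter.mp hi).2,
    Finset.sum_const, Finset.sum_const]

namespace IsSemiSIC

def aMinus (d : ℕ) (b : ℝ) : ℝ := (1 - √(1 - 4 * b * ((d : ℝ) ^ 2 - 1))) / 2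

def aPlus (d : ℕ) (b : ℝ) : ℝ := (1 + √(1 - 4 * b * ((d : ℝ) ^ 2 - 1))) / 2

variable {d : ℕ} {b : ℝ} {E : Fin (d ^ 2) → Matrix (Fin d) (Fin d) ℂ}

theorem trace_pos (hE : IsSemiSIC d b E) (x : Fin (d ^ 2)) : 0 < (E x).trace :=
  (hE.1 x).trace_pos_of_rank_eq_one (hE.2.1 x)

theorem trace_eq_ofReal_re (hE : IsSemiSIC d b E) (x : Fin (d ^ 2)) :
    (E x).trace = ((E x).trace.re : ℂ) :=
  Complex.eq_re_of_ofReal_le (hE.trace_pos x).le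

theorem trace_re_pos (hE : IsSemiSIC d b E) (x : Fin (d ^ 2)) : 0 < (E x).trace.re :=
  (Complex.pos_iff.mp (hE.trace_pos x)).1

theorem sum_trace_re (hE : IsSemiSIC d b E) : ∑ x, (E x).trace.re = d := by
  rw [← Complex.re_sum, ← trace_sum, hE.2.2.1, trace_one, Fintype.card_fin, Complex.natCast_re]

theorem trace_re_sq_sub_trace_re (hE : IsSemiSIC d b E) (x : Fin (d ^ 2)) :
    (E x).trace.re ^ 2 - (E x).trace.re + ((d : ℝ) ^ 2 - 1) * b = 0 := by
  have hpair : (E x).trace = ∑ y, (E x * E y).trace := by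
    rw [← trace_sum, ← Finset.mul_sum, hE.2.2.1, mul_one]
  rw [← Finset.add_sum_erase _ _ (Finset.mem_univ x),
    mul_self_eq_trace_smul_of_rank_le_one (hE.2.1 x).le, trace_smul,
    Finset.sum_congr rfl fun y hy => hE.2.2.2.2 x y (Finset.ne_of_mem_erase hy).symm,
    Finset.sum_const, Finset.card_erase_of_mem (Finset.mem_univ x), Finset.card_univ,
    Fintype.card_fin, nsmul_eq_mul, Nat.cast_pred x.pos, smul_eq_mul,
    hE.trace_eq_ofReal_re x] at hpair
  have : (((E x).trace.re ^ 2 - (E x).trace.re + ((d : ℝ) ^ 2 - 1) * b : ℝ) : ℂ) = 0 := by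
    push_cast at hpair ⊢
    linear_combination -hpair
  exact_mod_cast this

theorem trace_re_eq_aMinus_or_aPlus (hE : IsSemiSIC d b E) (x : Fin (d ^ 2)) :
    (E x).trace.re = aMinus d b ∨ (E x).trace.re = aPlus d b := by
  have := eq_or_eq_of_sq_sub_self_add_eq_zero (hE.trace_re_sq_sub_trace_re x)
  rwa [mul_comm (_ - 1) b, ← mul_assoc] at this

open Finset in
theorem card_mul_aMinus_add_mul_aPlus (hE : IsSemiSIC d b E) :
    (#{x | (E x).trace.re = aMinus d b} : ℝ) * aMinus d b
      + ((d : ℝ) ^ 2 - #{x | (E x).trace.re = aMinus d b}) * aPlus d b = d := by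
  have hsplit := sum_eq_card_filter_smul_add_of_forall_eq_or_eq univ
    fun x _ => hE.trace_re_eq_aMinus_or_aPlus x
  have hcompl := card_filter_add_card_filter_not (s := univ) (fun x => (E x).trace.re = aMinus d b)
  rw [card_univ, Fintype.card_fin] at hcompl
  rw [hE.sum_trace_re, nsmul_eq_mul, nsmul_eq_mul] at hsplit
  have hcomplR : (#{x | (E x).trace.re = aMinus d b} : ℝ) +
      #{x | (E x).trace.re ≠ aMinus d b} = (d : ℝ) ^ 2 := by
    exact_mod_cast hcompl
  linear_combination -hsplit - aPlus d b * hcomplR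

end IsSemiSIC

open IsSemiSIC in
theorem k_bounds_of_isSemiSIC (d : ℕ) (hd : 3 ≤ d) (b : ℝ)
    (E : Fin (d ^ 2) → Matrix (Fin d) (Fin d) ℂ) (hE : IsSemiSIC d b E)
    (aM : ℝ)
    (haM : aM = (1 - Real.sqrt (1 - 4 * b * ((d : ℝ) ^ 2 - 1))) / 2)
    (k : ℕ)
    (hk : k = (Finset.univ.filter fun x => (E x).trace = (aM : ℂ)).card) :
    d ^ 2 - d < k ∧ k ≤ d ^ 2 := by
  classical
  have hk' : k = (Finset.univ.filter fun x => (E x).trace.re = aMinus d b).card := by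
    rw [hk, haM, Finset.filter_congr fun x _ => by rw [hE.trace_eq_ofReal_re x, Complex.ofReal_inj]]
    rfl
  have hdR : (3 : ℝ) ≤ d := by exact_mod_cast hd
  have hs0 : 0 ≤ √(1 - 4 * b * ((d : ℝ) ^ 2 - 1)) := Real.sqrt_nonneg _
  have hrel : √(1 - 4 * b * ((d : ℝ) ^ 2 - 1)) * (2 * k - (d : ℝ) ^ 2) = (d : ℝ) ^ 2 - 2 * d := by
    have hcount := hE.card_mul_aMinus_add_mul_aPlus
    rw [← hk', aMinus, aPlus] at hcount
    linear_combination -2 * hcount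
  have hgap : (d : ℝ) ^ 2 < 2 * k := by nlinarith
  have hkpos : 0 < k := by
    have : (0 : ℝ) < k := by nlinarith
    exact_mod_cast this
  have haMinus_pos : 0 < aMinus d b := by
    obtain ⟨x, hx⟩ := Finset.card_pos.mp (hk' ▸ hkpos)
    exact (Finset.mem_filter.mp hx).2 ▸ hE.trace_re_pos x
  have hs1 : √(1 - 4 * b * ((d : ℝ) ^ 2 - 1)) < 1 := by
    rw [aMinus] at haMinus_pos
    linarith
  have hlt : (d : ℝ) ^ 2 < k + d := by nlinarith
  have : d ^ 2 < k + d := by exact_mod_cast hlt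
  exact ⟨by omega, hk' ▸ (Finset.card_filter_le _ _).trans_eq (by simp)⟩
end
end
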